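/- Let V be a linear subspace of polynomials over a finite field F and R ∈ ℕ. If V is homogeneous (spanned by forms), then U_R(V) = Span{X ∈ V : rk(X) < R} is also homogeneous. -/

import Mathlib

open MvPolynomial
open scoped BigOperators

namespace PaperDefs

variable (F : Type) [Field F] [Fintype F] [DecidableEq F]

/-- A multivariate polynomial is *reduced* if every variable occurs with degree at most `|F| - 1`.
Over a finite field, every function `F^n → F` has a unique reduced polynomial representative. -/
def ReducedPoly {n : ℕ} (P : MvPolynomial (Fin n) F) : Prop :=
  ∀ i, P.degreeOf i ≤ Fintype.card F - 1

/-- `P` represents the function `f`. -/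
def Represents {n : ℕ} (P : MvPolynomial (Fin n) F) (f : (Fin n → F) → F) : Prop :=
  ∀ x, MvPolynomial.eval x P = f x

/-- Degree of a polynomial function: total degree of its (unique) reduced representative. -/
noncomputable def degF {n : ℕ} (f : (Fin n → F) → F) : ℕ :=
  sInf {d | ∃ P : MvPolynomial (Fin n) F, ReducedPoly F P ∧ Represents F P f ∧ P.totalDegree = d}

/-- `f` is a form (homogeneous polynomial function) of degree `d ≥ 1`. -/
def IsFormOfDegree {n : ℕ} (f : (Fin n → F) → F) (d : ℕ) : Prop :=
  0 < d ∧ ∃ P : MvPolynomial (Fin n) F, P ≠ 0 ∧ ReducedPoly F P ∧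
    P.IsHomogeneous d ∧ Represents F P f

/-- `f` is a form: a homogeneous polynomial function of positive degree. -/
def IsForm {n : ℕ} (f : (Fin n → F) → F) : Prop := ∃ d, IsFormOfDegree F f d

/-- A function is non-constant. -/
def NonConstantFn {α β : Type*} (f : α → β) : Prop := ¬ ∃ c, ∀ x, f x = c

/-- A polynomial function is reducible if it is a product of two non-constant polynomial
functions. -/
def ReduciblePoly {n : ℕ} (f : (Fin n → F) → F) : Prop :=
  ∃ g h : (Fin n → F) → F, NonConstantFn g ∧ NonConstantFn h ∧ ∀ x, f x = g x * h x

/-- Rank of a form of degree `d`: the least `r` such that the form is a sum of `r` reducible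
forms of degree `d`; `∞` for `d ≤ 1`. -/
noncomputable def rkFormD {n : ℕ} (d : ℕ) (f : (Fin n → F) → F) : ℕ∞ :=
  if d ≤ 1 then ⊤ else
    sInf {r : ℕ∞ | ∃ k : ℕ, r = (k : ℕ∞) ∧ ∃ R : Fin k → (Fin n → F) → F,
      (∀ i, IsFormOfDegree F (R i) d ∧ ReduciblePoly F (R i)) ∧ ∀ x, f x = ∑ i, R i x}

/-- Rank of a general polynomial function: the rank of the highest-degree homogeneous part of
its reduced representative (`0` for constants). -/
noncomputable def rkFun {n : ℕ} (f : (Fin n → F) → F) : ℕ∞ :=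
  sInf {r : ℕ∞ | ∃ P : MvPolynomial (Fin n) F, ReducedPoly F P ∧ Represents F P f ∧
    r = if P.totalDegree = 0 then 0 else
      rkFormD F P.totalDegree
        (fun x => MvPolynomial.eval x ((MvPolynomial.homogeneousComponent P.totalDegree) P))}

/-- `U_R(V)`: the span of the polynomials in `V` of rank less than `R`. -/
noncomputable def lowRankSpan {n : ℕ} (V : Submodule F ((Fin n → F) → F)) (R : ℕ) :
    Submodule F ((Fin n → F) → F) :=
  Submodule.span F {f | f ∈ V ∧ rkFun F f < (R : ℕ∞)}

/-- Degree of a subspace of polynomial functions: the largest degree of any of its members. -/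
noncomputable def degSub {n : ℕ} (W : Submodule F ((Fin n → F) → F)) : ℕ :=
  sSup (degF F '' (W : Set ((Fin n → F) → F)))

/-- A subspace of polynomial functions is homogeneous if it is spanned by forms. -/
def IsHomogeneousSub {n : ℕ} (W : Submodule F ((Fin n → F) → F)) : Prop :=
  ∃ S : Set ((Fin n → F) → F), (∀ f ∈ S, IsForm F f) ∧ W = Submodule.span F S

/-- `V^↑`: the top-degree homogeneous component of `V` (the subspace consisting of `0`
together with the forms in `V` of degree `deg(V)`). -/
noncomputable def topComponent {n : ℕ} (V : Submodule F ((Fin n → F) → F)) :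
    Submodule F ((Fin n → F) → F) :=
  Submodule.span F {f | f ∈ V ∧ IsFormOfDegree F f (degSub F V)}

/-- `f ∈ F[X]`: `f` is a polynomial expression in `X₁, …, X_k`. -/
def InAlg {n k : ℕ} (X : Fin k → (Fin n → F) → F) (f : (Fin n → F) → F) : Prop :=
  ∃ G : MvPolynomial (Fin k) F, ∀ x, MvPolynomial.eval (fun i => X i x) G = f x

/-- `Pr[X = y]` over a uniformly random input of `F^n`. -/
noncomputable def prEq {n k : ℕ} (X : Fin k → (Fin n → F) → F) (y : Fin k → F) : ℝ :=
  (Nat.card {x : Fin n → F // ∀ i, X i x = y i} : ℝ) / (Fintype.card F : ℝ) ^ n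

/-- `Pr[X ∈ S]` over a uniformly random input of `F^n`. -/
noncomputable def prMem {n k : ℕ} (X : Fin k → (Fin n → F) → F) (S : Set (Fin k → F)) : ℝ :=
  (Nat.card {x : Fin n → F // (fun i => X i x) ∈ S} : ℝ) / (Fintype.card F : ℝ) ^ n

/-- A tuple `X = (X₀, X₁, …, X_k)` of forms is weak `ε`-regular: `X₀` has maximal degree and
for every `y`, `|Pr[X = y] - q⁻¹ Pr[X' = y']| ≤ ε q^{-(k+1)}`, where `X' = (X₁, …, X_k)`. -/
def WeakRegular {n k : ℕ} (ε : ℝ) (X : Fin (k + 1) → (Fin n → F) → F) : Prop :=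
  (∀ i, IsForm F (X i)) ∧
  (∀ i, degF F (X i) ≤ degF F (X 0)) ∧
  ∀ y : Fin (k + 1) → F,
    |prEq F X y -
      (Fintype.card F : ℝ)⁻¹ * prEq F (fun i : Fin k => X i.succ) (fun i : Fin k => y i.succ)|
      ≤ ε / (Fintype.card F : ℝ) ^ (k + 1)

/-- The bias of a polynomial function with respect to an additive character `χ`. -/
noncomputable def biasF {n : ℕ} (χ : AddChar F ℂ) (f : (Fin n → F) → F) : ℂ :=
  (∑ x : Fin n → F, χ (f x)) / (Fintype.card F : ℂ) ^ n

/-- A tuple of forms `X = (X₁, …, X_r)` is `t`-rank-regular: every element of `Span(X)`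
outside of some strict subspace has rank at least `t · r`. -/
def RankRegular {n r : ℕ} (t : ℕ) (X : Fin r → (Fin n → F) → F) : Prop :=
  ∃ U : Submodule F ((Fin n → F) → F), U < Submodule.span F (Set.range X) ∧
    ∀ f ∈ Submodule.span F (Set.range X), f ∉ U → ((t * r : ℕ) : ℕ∞) ≤ rkFun F f

/-- `P ⊆ F[X]` is a minimal decomposition: no strict subspace of `Span(X)` spanned by forms
generates `P`. -/
def MinimalDecomp {n m r : ℕ} (P : Fin m → (Fin n → F) → F)
    (X : Fin r → (Fin n → F) → F) : Prop :=
  (∀ i, InAlg F X (P i)) ∧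
  ∀ (k : ℕ) (Y : Fin k → (Fin n → F) → F), (∀ j, IsForm F (Y j)) →
    Submodule.span F (Set.range Y) < Submodule.span F (Set.range X) →
    ¬ ∀ i, InAlg F Y (P i)

/-- Degree of a univariate polynomial function: the degree of its reduced representative
(in which the variable has degree at most `|F| - 1`). -/
noncomputable def degU (u : F → F) : ℕ :=
  sInf {d | ∃ p : Polynomial F, p.natDegree ≤ Fintype.card F - 1 ∧ (∀ x, p.eval x = u x) ∧
    p.natDegree = d}

/-- Univariate degree of a polynomial map `P : F^n → F^m`: the minimum degree of a
non-constant univariate polynomial curve whose image is contained in the image of `P`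
(`∞` if no such curve exists, e.g. for constant maps). -/
noncomputable def udeg {n m : ℕ} (P : Fin m → (Fin n → F) → F) : ℕ∞ :=
  sInf {d : ℕ∞ | ∃ U : Fin m → F → F,
    NonConstantFn (fun t => fun i => U i t) ∧
    Set.range (fun t => fun i => U i t) ⊆ Set.range (fun x => fun i => P i x) ∧
    d = ((Finset.univ.sup fun i => degU F (U i) : ℕ) : ℕ∞)}

/-- Univariate degree of a single polynomial function `P : F^n → F`. -/
noncomputable def udeg1 {n : ℕ} (f : (Fin n → F) → F) : ℕ∞ :=
  sInf {d : ℕ∞ | ∃ u : F → F, NonConstantFn u ∧ Set.range u ⊆ Set.range f ∧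
    d = ((degU F u : ℕ) : ℕ∞)}

/-- `f` is `t`-reducible: a product of polynomial functions each of degree at most `t`. -/
def TReducible {n : ℕ} (t : ℝ) (f : (Fin n → F) → F) : Prop :=
  ∃ (s : ℕ) (g : Fin s → (Fin n → F) → F), (∀ j, (degF F (g j) : ℝ) ≤ t) ∧
    ∀ x, f x = ∏ j, g j x

/-- The line in `F^(k+1)` through `z` in direction `e₁`. -/
def lineE1 {k : ℕ} (z : Fin (k + 1) → F) : Set (Fin (k + 1) → F) :=
  {y | ∃ t : F, y = t • (Pi.single (0 : Fin (k + 1)) (1 : F) : Fin (k + 1) → F) + z}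

end PaperDefs

/-!
Over a finite field every function `F^n → F` has a unique reduced representative, so taking the
degree-`d` homogeneous component `f ↦ f_d` is a linear projection. A subspace `V` spanned by forms
is stable under all these projections and killed by `f ↦ f_0`. The rank of `f` only depends on its
top-degree form `f_D`; since `f_D` and, for `d < D`, `f - f_d` have the same top-degree form as `f`,
for `f ∈ V` of rank `< R` the functions `f`, `f - f_d` and `f_D` all lie in `V` and have rank `< R`.
Hence every component `f_d` lies in `U_R(V)`, and `U_R(V)` is spanned by the forms it contains.
-/

namespace MvPolynomial

variable {σ R : Type*}

section CommSemiring

variable [CommSemiring R]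

theorem homogeneousComponent_mem_restrictDegree {p : MvPolynomial σ R} {k : ℕ}
    (hp : p ∈ restrictDegree σ R k) (d : ℕ) : homogeneousComponent d p ∈ restrictDegree σ R k := by
  rw [mem_restrictDegree] at hp ⊢
  intro s hs
  rw [support_homogeneousComponent] at hs
  exact hp s (Finset.mem_filter.mp hs).1

theorem homogeneousComponent_totalDegree_ne_zero {p : MvPolynomial σ R} (hp : p ≠ 0) :
    homogeneousComponent p.totalDegree p ≠ 0 := by
  obtain ⟨m, hm, hdeg⟩ := Finset.exists_mem_eq_sup p.support (support_nonempty.mpr hp)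
    fun s => s.sum fun _ e => e
  have hm_top : m.degree = p.totalDegree := hdeg.symm
  refine ne_zero_iff.mpr ⟨m, ?_⟩
  rw [coeff_homogeneousComponent, if_pos hm_top]
  exact mem_support_iff.mp hm

theorem totalDegree_homogeneousComponent_totalDegree (p : MvPolynomial σ R) :
    (homogeneousComponent p.totalDegree p).totalDegree = p.totalDegree := by
  rcases eq_or_ne p 0 with rfl | hp
  · simp
  · exact (homogeneousComponent_isHomogeneous _ p).totalDegree
      (homogeneousComponent_totalDegree_ne_zero hp)

end CommSemiring

variable [CommRing R]

theorem totalDegree_sub_homogeneousComponent {p : MvPolynomial σ R} {d : ℕ}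
    (hd : d < p.totalDegree) : (p - homogeneousComponent d p).totalDegree = p.totalDegree := by
  rw [sub_eq_add_neg]
  apply totalDegree_add_eq_left_of_totalDegree_lt
  rw [totalDegree_neg]
  exact (homogeneousComponent_isHomogeneous d p).totalDegree_le.trans_lt hd

theorem homogeneousComponent_sub_homogeneousComponent {p : MvPolynomial σ R} {d e : ℕ}
    (h : e ≠ d) :
    homogeneousComponent e (p - homogeneousComponent d p) = homogeneousComponent e p := by
  rw [map_sub, homogeneousComponent_of_mem (homogeneousComponent_mem d p), if_neg h, sub_zero]

end MvPolynomial

namespace PaperDefs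

section

variable {F : Type} [Field F] [Fintype F] {n : ℕ} {S : Set ((Fin n → F) → F)}

theorem reducedPoly_iff_mem_restrictDegree {P : MvPolynomial (Fin n) F} :
    ReducedPoly F P ↔ P ∈ restrictDegree (Fin n) F (Fintype.card F - 1) := by
  simp only [ReducedPoly, mem_restrictDegree_iff_sup, degreeOf_def]

variable (F n) in
noncomputable def evalReducedEquiv :
    restrictDegree (Fin n) F (Fintype.card F - 1) ≃ₗ[F] ((Fin n → F) → F) :=
  LinearEquiv.ofBijective (evalᵢ (Fin n) F)
    ⟨LinearMap.ker_eq_bot.mp (ker_evalₗ _ _), LinearMap.range_eq_top.mp (range_evalᵢ _ _)⟩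

variable (F n) in
noncomputable def reducedRep : ((Fin n → F) → F) →ₗ[F] MvPolynomial (Fin n) F :=
  (restrictDegree (Fin n) F (Fintype.card F - 1)).subtype ∘ₗ
    (evalReducedEquiv F n).symm.toLinearMap

theorem reducedPoly_reducedRep (f : (Fin n → F) → F) : ReducedPoly F (reducedRep F n f) :=
  reducedPoly_iff_mem_restrictDegree.mpr ((evalReducedEquiv F n).symm f).2

theorem evalₗ_reducedRep (f : (Fin n → F) → F) : evalₗ F (Fin n) (reducedRep F n f) = f :=
  (evalReducedEquiv F n).apply_symm_apply f

theorem represents_reducedRep (f : (Fin n → F) → F) : Represents F (reducedRep F n f) f :=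
  congrFun (evalₗ_reducedRep f)

theorem reducedRep_injective : Function.Injective (reducedRep F n) :=
  Subtype.val_injective.comp (evalReducedEquiv F n).symm.injective

theorem reducedRep_eq {P : MvPolynomial (Fin n) F} {f : (Fin n → F) → F}
    (hP : ReducedPoly F P) (hPf : Represents F P f) : reducedRep F n f = P := by
  obtain rfl : f = evalReducedEquiv F n ⟨P, reducedPoly_iff_mem_restrictDegree.mp hP⟩ :=
    funext fun x => (hPf x).symm
  simp [reducedRep]

variable (F n) in
noncomputable def homogeneousPart (d : ℕ) : ((Fin n → F) → F) →ₗ[F] ((Fin n → F) → F) :=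
  evalₗ F (Fin n) ∘ₗ homogeneousComponent d ∘ₗ reducedRep F n

theorem reducedRep_homogeneousPart (d : ℕ) (f : (Fin n → F) → F) :
    reducedRep F n (homogeneousPart F n d f) = homogeneousComponent d (reducedRep F n f) :=
  reducedRep_eq (reducedPoly_iff_mem_restrictDegree.mpr
    (homogeneousComponent_mem_restrictDegree
      (reducedPoly_iff_mem_restrictDegree.mp (reducedPoly_reducedRep f)) d)) fun _ => rfl

theorem sum_homogeneousPart (f : (Fin n → F) → F) :
    ∑ d ∈ Finset.range ((reducedRep F n f).totalDegree + 1), homogeneousPart F n d f = f := by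
  simp only [homogeneousPart, LinearMap.comp_apply]
  rw [← map_sum, sum_homogeneousComponent, evalₗ_reducedRep]

theorem isFormOfDegree_iff {f : (Fin n → F) → F} {d : ℕ} :
    IsFormOfDegree F f d ↔ 0 < d ∧ reducedRep F n f ≠ 0 ∧ (reducedRep F n f).IsHomogeneous d := by
  constructor
  · rintro ⟨hd, P, hP0, hPred, hPhom, hPf⟩
    rw [reducedRep_eq hPred hPf]
    exact ⟨hd, hP0, hPhom⟩
  · rintro ⟨hd, h0, hhom⟩
    exact ⟨hd, _, h0, reducedPoly_reducedRep f, hhom, represents_reducedRep f⟩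

theorem homogeneousPart_of_isFormOfDegree {f : (Fin n → F) → F} {e : ℕ}
    (hf : IsFormOfDegree F f e) (d : ℕ) : homogeneousPart F n d f = if d = e then f else 0 := by
  obtain ⟨-, -, hhom⟩ := isFormOfDegree_iff.mp hf
  simp only [homogeneousPart, LinearMap.comp_apply, homogeneousComponent_of_mem hhom]
  split_ifs
  · exact evalₗ_reducedRep f
  · exact map_zero _

theorem isFormOfDegree_homogeneousPart {f : (Fin n → F) → F} {d : ℕ} (hd : 0 < d)
    (hf : homogeneousPart F n d f ≠ 0) : IsFormOfDegree F (homogeneousPart F n d f) d := by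
  refine isFormOfDegree_iff.mpr ⟨hd, ?_, ?_⟩
  · rwa [ne_eq, ← map_zero (reducedRep F n), reducedRep_injective.eq_iff]
  · rw [reducedRep_homogeneousPart]
    exact homogeneousComponent_isHomogeneous d _

theorem homogeneousPart_mem_span (hS : ∀ g ∈ S, IsForm F g) (d : ℕ) {f : (Fin n → F) → F}
    (hf : f ∈ Submodule.span F S) : homogeneousPart F n d f ∈ Submodule.span F S := by
  refine (Submodule.span_le (p := (Submodule.span F S).comap (homogeneousPart F n d))).mpr
    (fun g hg => ?_) hf
  obtain ⟨e, he⟩ := hS g hg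
  rw [SetLike.mem_coe, Submodule.mem_comap, homogeneousPart_of_isFormOfDegree he]
  split_ifs
  · exact Submodule.subset_span hg
  · exact zero_mem _

theorem homogeneousPart_zero_of_mem_span (hS : ∀ g ∈ S, IsForm F g) {f : (Fin n → F) → F}
    (hf : f ∈ Submodule.span F S) : homogeneousPart F n 0 f = 0 := by
  refine (Submodule.span_le (p := LinearMap.ker (homogeneousPart F n 0))).mpr (fun g hg => ?_) hf
  obtain ⟨e, he⟩ := hS g hg
  rw [SetLike.mem_coe, LinearMap.mem_ker, homogeneousPart_of_isFormOfDegree he,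
    if_neg he.1.ne]

theorem rkFun_eq (f : (Fin n → F) → F) :
    rkFun F f = if (reducedRep F n f).totalDegree = 0 then 0 else
      rkFormD F (reducedRep F n f).totalDegree
        fun x => eval x (homogeneousComponent (reducedRep F n f).totalDegree
          (reducedRep F n f)) := by
  rw [rkFun, ← sInf_singleton (a := ite _ _ _)]
  congr 1
  ext r
  constructor
  · rintro ⟨P, hP, hPf, rfl⟩
    rw [reducedRep_eq hP hPf]
    rfl
  · rintro rfl
    exact ⟨_, reducedPoly_reducedRep f, represents_reducedRep f, rfl⟩

theorem rkFun_eq_of_leading_eq {f g : (Fin n → F) → F}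
    (hdeg : (reducedRep F n g).totalDegree = (reducedRep F n f).totalDegree)
    (hlead : homogeneousComponent (reducedRep F n f).totalDegree (reducedRep F n g) =
      homogeneousComponent (reducedRep F n f).totalDegree (reducedRep F n f)) :
    rkFun F g = rkFun F f := by
  rw [rkFun_eq, rkFun_eq, hdeg, hlead]

theorem homogeneousPart_mem_lowRankSpan (hS : ∀ g ∈ S, IsForm F g) {R : ℕ}
    {f : (Fin n → F) → F} (hf : f ∈ Submodule.span F S) (hrk : rkFun F f < R) (d : ℕ) :
    homogeneousPart F n d f ∈ lowRankSpan F (Submodule.span F S) R := by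
  have mem_of_rkFun_eq {g} (hg : g ∈ Submodule.span F S) (hgf : rkFun F g = rkFun F f) :
      g ∈ lowRankSpan F (Submodule.span F S) R :=
    Submodule.subset_span ⟨hg, hgf ▸ hrk⟩
  rcases lt_trichotomy d (reducedRep F n f).totalDegree with hlt | rfl | hgt
  · have hrep : reducedRep F n (f - homogeneousPart F n d f) =
        reducedRep F n f - homogeneousComponent d (reducedRep F n f) := by
      rw [map_sub, reducedRep_homogeneousPart]
    rw [← sub_sub_cancel f (homogeneousPart F n d f)]
    refine sub_mem (Submodule.subset_span ⟨hf, hrk⟩)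
      (mem_of_rkFun_eq (sub_mem hf (homogeneousPart_mem_span hS d hf)) ?_)
    refine rkFun_eq_of_leading_eq ?_ ?_ <;> rw [hrep]
    · exact totalDegree_sub_homogeneousComponent hlt
    · exact homogeneousComponent_sub_homogeneousComponent hlt.ne'
  · refine mem_of_rkFun_eq (homogeneousPart_mem_span hS _ hf) (rkFun_eq_of_leading_eq ?_ ?_) <;>
      rw [reducedRep_homogeneousPart]
    · exact totalDegree_homogeneousComponent_totalDegree _
    · exact homogeneousComponent_eq_self (homogeneousComponent_isHomogeneous _ _)
  · have hzero : homogeneousPart F n d f = 0 := by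
      rw [homogeneousPart, LinearMap.comp_apply, LinearMap.comp_apply,
        homogeneousComponent_eq_zero _ _ hgt, map_zero]
    rw [hzero]
    exact zero_mem _

end

variable (F : Type) [Field F] [Fintype F] [DecidableEq F]

/-- If `V` is homogeneous (spanned by forms), then so is `U_R(V)`. -/
theorem lowRankSpan_homogeneous (n R : ℕ) (V : Submodule F ((Fin n → F) → F))
    (hV : IsHomogeneousSub F V) :
    IsHomogeneousSub F (lowRankSpan F V R) := by
  obtain ⟨S, hS, rfl⟩ := hV
  refine ⟨{g | g ∈ lowRankSpan F (Submodule.span F S) R ∧ IsForm F g}, fun g hg => hg.2,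
    le_antisymm ?_ (Submodule.span_le.mpr fun g hg => hg.1)⟩
  rw [lowRankSpan, Submodule.span_le]
  rintro f ⟨hfV, hfrk⟩
  rw [SetLike.mem_coe, ← sum_homogeneousPart f]
  refine Submodule.sum_mem _ fun d _ => ?_
  by_cases hzero : homogeneousPart F n d f = 0
  · rw [hzero]
    exact zero_mem _
  have hd : 0 < d :=
    Nat.pos_of_ne_zero fun h => hzero (h ▸ homogeneousPart_zero_of_mem_span hS hfV)
  exact Submodule.subset_span
    ⟨homogeneousPart_mem_lowRankSpan hS hfV hfrk d, d, isFormOfDegree_homogeneousPart hd hzero⟩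

end PaperDefs
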